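/- (Theorem 2, (i)⇔(iii)) There exists an observer candidate Σ̂ that is a UIO for the system Σ if and only if there exist matrices T₀, T₁ ∈ ℝ^{n×(n+p−r)} and a Schur stable matrix A_UIO ∈ ℝ^{n×n} such that the polynomial matrix identity (T₀ + z T₁) · [M_E M_F] · [zI_n − A; −C] = zI_n − A_UIO holds in ℝ[z]^{n×n}, where [zI_n − A; −C] ∈ ℝ[z]^{(n+p)×n} stacks zI_n − A over −C. -/

import Mathlib

/-!
Write `M = [M_E M_F]`, `N = M [A; C]` and `K = M [B; D]`. Expanding in `z`, the polynomial identity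
says exactly `T₁ M_E = 0`, `T₀ M_E - T₁ N = I` and `T₀ N = A_UIO`.

Since `M` annihilates `[E; F]`, every solution of `Σ` satisfies the disturbance-free relation
`M_E x(t+1) + M_F y(t) = N x(t) + K u(t)`. Given the three identities, this relation recovers
`x(t)` as `T₀ M_E x(t) + T₁ K u(t) - T₁ M_F y(t)`, and `z = T₀ M_E x` obeys an observer recursion
with state matrix `A_UIO`. The difference of two observer solutions with the same `u, y`
evolves by `A_UIO`, so the error vanishes exactly when `A_UIOᵗ → 0`, i.e. when `A_UIO` is Schur
stable (Gelfand's formula in one direction, `μᵗ ∈ σ(A_UIOᵗ)` in the other).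

Conversely, testing an acceptor on one-step solutions with `u = 0` shows that the row blocks
`[I - D_y C, A_UIO D_y - B_y]` and `[0, D_y]` annihilate `[E; F]`. Because `ker M = im [E; F]`,
they factor through `M`; the two factors are `T₀` and `-T₁`.
-/

open Matrix Filter

noncomputable section

/-- A real square matrix is Schur stable if all its complex eigenvalues
have modulus strictly less than 1. -/
def SchurStable {n : ℕ} (M : Matrix (Fin n) (Fin n) ℝ) : Prop :=
  ∀ μ ∈ spectrum ℂ (M.map (algebraMap ℝ ℂ)), ‖μ‖ < 1

/-- `(x, u, y, d)` is a solution of the system `Σ`: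
`x(t+1) = A x(t) + B u(t) + E d(t)`, `y(t) = C x(t) + D u(t) + F d(t)`. -/
def SigmaSol {n m p r : ℕ}
    (A : Matrix (Fin n) (Fin n) ℝ) (B : Matrix (Fin n) (Fin m) ℝ)
    (Cm : Matrix (Fin p) (Fin n) ℝ) (Dm : Matrix (Fin p) (Fin m) ℝ)
    (E : Matrix (Fin n) (Fin r) ℝ) (F : Matrix (Fin p) (Fin r) ℝ)
    (x : ℕ → Fin n → ℝ) (u : ℕ → Fin m → ℝ) (y : ℕ → Fin p → ℝ)
    (d : ℕ → Fin r → ℝ) : Prop :=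
  ∀ t : ℕ,
    x (t + 1) = A.mulVec (x t) + B.mulVec (u t) + E.mulVec (d t) ∧
    y t = Cm.mulVec (x t) + Dm.mulVec (u t) + F.mulVec (d t)

/-- `(x̂, u, y, z)` is a solution of the observer candidate `Σ̂`:
`z(t+1) = A_UIO z(t) + Bu u(t) + By y(t)`, `x̂(t) = z(t) + Du u(t) + Dy y(t)`. -/
def ObsSol {n m p : ℕ}
    (Auio : Matrix (Fin n) (Fin n) ℝ) (Bu : Matrix (Fin n) (Fin m) ℝ)
    (By : Matrix (Fin n) (Fin p) ℝ) (Du : Matrix (Fin n) (Fin m) ℝ)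
    (Dy : Matrix (Fin n) (Fin p) ℝ)
    (xh : ℕ → Fin n → ℝ) (u : ℕ → Fin m → ℝ) (y : ℕ → Fin p → ℝ)
    (z : ℕ → Fin n → ℝ) : Prop :=
  ∀ t : ℕ,
    z (t + 1) = Auio.mulVec (z t) + Bu.mulVec (u t) + By.mulVec (y t) ∧
    xh t = z t + Du.mulVec (u t) + Dy.mulVec (y t)

/-- `Σ̂` is an acceptor for `Σ`: every solution of `Σ` can be tracked exactly. -/
def IsAcceptor {n m p r : ℕ}
    (A : Matrix (Fin n) (Fin n) ℝ) (B : Matrix (Fin n) (Fin m) ℝ)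
    (Cm : Matrix (Fin p) (Fin n) ℝ) (Dm : Matrix (Fin p) (Fin m) ℝ)
    (E : Matrix (Fin n) (Fin r) ℝ) (F : Matrix (Fin p) (Fin r) ℝ)
    (Auio : Matrix (Fin n) (Fin n) ℝ) (Bu : Matrix (Fin n) (Fin m) ℝ)
    (By : Matrix (Fin n) (Fin p) ℝ) (Du : Matrix (Fin n) (Fin m) ℝ)
    (Dy : Matrix (Fin n) (Fin p) ℝ) : Prop :=
  ∀ (x : ℕ → Fin n → ℝ) (u : ℕ → Fin m → ℝ) (y : ℕ → Fin p → ℝ)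
    (d : ℕ → Fin r → ℝ), SigmaSol A B Cm Dm E F x u y d →
      ∃ z : ℕ → Fin n → ℝ, ObsSol Auio Bu By Du Dy x u y z

/-- `Σ̂` is an unknown-input observer (UIO) for `Σ`: it is an acceptor and
the estimation error tends to zero for all matching solutions. -/
def IsUIO {n m p r : ℕ}
    (A : Matrix (Fin n) (Fin n) ℝ) (B : Matrix (Fin n) (Fin m) ℝ)
    (Cm : Matrix (Fin p) (Fin n) ℝ) (Dm : Matrix (Fin p) (Fin m) ℝ)
    (E : Matrix (Fin n) (Fin r) ℝ) (F : Matrix (Fin p) (Fin r) ℝ)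
    (Auio : Matrix (Fin n) (Fin n) ℝ) (Bu : Matrix (Fin n) (Fin m) ℝ)
    (By : Matrix (Fin n) (Fin p) ℝ) (Du : Matrix (Fin n) (Fin m) ℝ)
    (Dy : Matrix (Fin n) (Fin p) ℝ) : Prop :=
  IsAcceptor A B Cm Dm E F Auio Bu By Du Dy ∧
  ∀ (x : ℕ → Fin n → ℝ) (u : ℕ → Fin m → ℝ) (y : ℕ → Fin p → ℝ)
    (d : ℕ → Fin r → ℝ) (xh : ℕ → Fin n → ℝ) (z : ℕ → Fin n → ℝ),
      SigmaSol A B Cm Dm E F x u y d → ObsSol Auio Bu By Du Dy xh u y z →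
      Tendsto (fun t => x t - xh t) atTop (nhds 0)

/-- Row index type of the data matrix `Φ_d = [X_p; X_f; U_p; U_f; Y_p; Y_f]`. -/
abbrev RowIdx (n m p : ℕ) := (Fin n ⊕ Fin n) ⊕ ((Fin m ⊕ Fin m) ⊕ (Fin p ⊕ Fin p))

/-- The data matrix `Φ_d = [X_p; X_f; U_p; U_f; Y_p; Y_f] ∈ ℝ^{2(n+m+p)×(T−1)}`. -/
def PhiD {n m p : ℕ} (T : ℕ) (xd : ℕ → Fin n → ℝ) (ud : ℕ → Fin m → ℝ)
    (yd : ℕ → Fin p → ℝ) : Matrix (RowIdx n m p) (Fin (T - 1)) ℝ :=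
  Matrix.of fun i j =>
    match i with
    | Sum.inl (Sum.inl a) => xd j.1 a
    | Sum.inl (Sum.inr a) => xd (j.1 + 1) a
    | Sum.inr (Sum.inl (Sum.inl a)) => ud j.1 a
    | Sum.inr (Sum.inl (Sum.inr a)) => ud (j.1 + 1) a
    | Sum.inr (Sum.inr (Sum.inl a)) => yd j.1 a
    | Sum.inr (Sum.inr (Sum.inr a)) => yd (j.1 + 1) a

/-- The stacked vector `(x(t), x(t+1), u(t), u(t+1), y(t), y(t+1))`. -/
def stackVec {n m p : ℕ} (x : ℕ → Fin n → ℝ) (u : ℕ → Fin m → ℝ)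
    (y : ℕ → Fin p → ℝ) (t : ℕ) : RowIdx n m p → ℝ :=
  fun i =>
    match i with
    | Sum.inl (Sum.inl a) => x t a
    | Sum.inl (Sum.inr a) => x (t + 1) a
    | Sum.inr (Sum.inl (Sum.inl a)) => u t a
    | Sum.inr (Sum.inl (Sum.inr a)) => u (t + 1) a
    | Sum.inr (Sum.inr (Sum.inl a)) => y t a
    | Sum.inr (Sum.inr (Sum.inr a)) => y (t + 1) a

/-- The matrix `[X_p; U_p; U_f; D_p; D_f]` appearing in the Assumption. -/
def HistMat {n m r : ℕ} (T : ℕ) (xd : ℕ → Fin n → ℝ) (ud : ℕ → Fin m → ℝ)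
    (dd : ℕ → Fin r → ℝ) :
    Matrix (Fin n ⊕ ((Fin m ⊕ Fin m) ⊕ (Fin r ⊕ Fin r))) (Fin (T - 1)) ℝ :=
  Matrix.of fun i j =>
    match i with
    | Sum.inl a => xd j.1 a
    | Sum.inr (Sum.inl (Sum.inl a)) => ud j.1 a
    | Sum.inr (Sum.inl (Sum.inr a)) => ud (j.1 + 1) a
    | Sum.inr (Sum.inr (Sum.inl a)) => dd j.1 a
    | Sum.inr (Sum.inr (Sum.inr a)) => dd (j.1 + 1) a

open Topology

theorem LinearMap.exists_comp_eq_of_ker_le {K V W U : Type*} [Field K] [AddCommGroup V]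
    [Module K V] [AddCommGroup W] [Module K W] [AddCommGroup U] [Module K U]
    (f : V →ₗ[K] W) (g : V →ₗ[K] U) (hfg : LinearMap.ker f ≤ LinearMap.ker g) :
    ∃ h : W →ₗ[K] U, h ∘ₗ f = g := by
  obtain ⟨s, hs⟩ := f.rangeRestrict.exists_rightInverse_of_surjective f.range_rangeRestrict
  obtain ⟨π, hπ⟩ := (LinearMap.range f).subtype.exists_leftInverse_of_injective
    (LinearMap.range f).ker_subtype
  refine ⟨g ∘ₗ s ∘ₗ π, LinearMap.ext fun x => ?_⟩
  have hπf : π (f x) = f.rangeRestrict x := by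
    simpa using LinearMap.congr_fun hπ (f.rangeRestrict x)
  have hsx : s (π (f x)) - x ∈ LinearMap.ker f := by
    rw [LinearMap.mem_ker, map_sub, hπf, sub_eq_zero]
    simpa using congrArg Subtype.val (LinearMap.congr_fun hs (f.rangeRestrict x))
  simpa [sub_eq_zero] using hfg hsx

theorem Matrix.exists_mul_eq_of_mulVec_eq_zero {K l m n : Type*} [Field K] [Fintype m]
    [Fintype n] [DecidableEq m] [DecidableEq n] (M : Matrix m n K) (L : Matrix l n K)
    (h : ∀ v, M *ᵥ v = 0 → L *ᵥ v = 0) : ∃ G : Matrix l m K, G * M = L := by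
  obtain ⟨g, hg⟩ := LinearMap.exists_comp_eq_of_ker_le M.mulVecLin L.mulVecLin fun v => h v
  refine ⟨LinearMap.toMatrix' g, Matrix.toLin'.injective ?_⟩
  rw [Matrix.toLin'_mul, Matrix.toLin'_toMatrix']
  exact hg

section PolynomialMatrix

open Polynomial

theorem Matrix.map_C_fromCols_mul_fromRows {R κ ν₁ ν₂ : Type*} [CommRing R] [Fintype ν₁]
    [Fintype ν₂] [DecidableEq ν₁] (M₁ : Matrix κ ν₁ R) (M₂ : Matrix κ ν₂ R)
    (P : Matrix ν₁ ν₁ R) (Q : Matrix ν₂ ν₁ R) :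
    (fromCols M₁ M₂).map C * fromRows ((X : R[X]) • (1 : Matrix ν₁ ν₁ R[X]) - P.map C) (-Q.map C) =
      (X : R[X]) • M₁.map C - (fromCols M₁ M₂ * fromRows P Q).map C := by
  rw [Matrix.map_mul, fromCols_map, fromRows_map, fromCols_mul_fromRows, fromCols_mul_fromRows]
  simp only [Matrix.mul_sub, Matrix.mul_smul, Matrix.mul_one, Matrix.mul_neg]
  abel

theorem Matrix.map_C_mul_X_smul_sub_eq_iff {R ι κ : Type*} [CommRing R] [Fintype κ]
    [DecidableEq ι] {T₀ T₁ : Matrix ι κ R} {M N : Matrix κ ι R} {A : Matrix ι ι R} :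
    (T₀.map C + (X : R[X]) • T₁.map C) * ((X : R[X]) • M.map C - N.map C) =
        (X : R[X]) • (1 : Matrix ι ι R[X]) - A.map C ↔
      T₁ * M = 0 ∧ T₀ * M - T₁ * N = 1 ∧ T₀ * N = A := by
  have hexpand : (T₀.map C + (X : R[X]) • T₁.map C) * ((X : R[X]) • M.map C - N.map C) =
      (X : R[X]) ^ 2 • (T₁ * M).map C + (X : R[X]) • (T₀ * M - T₁ * N).map C -
        (T₀ * N).map C := by
    simp only [Matrix.map_mul, Matrix.map_sub _ (map_sub C), Matrix.add_mul, Matrix.mul_sub,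
      Matrix.smul_mul, Matrix.mul_smul]
    module
  rw [hexpand]
  refine ⟨fun h => ?_, fun ⟨h₂, h₁, h₀⟩ => by
    rw [h₂, h₁, h₀, Matrix.map_zero _ C_0, Matrix.map_one _ C_0 C_1, smul_zero, zero_add]⟩
  have hcoeff (k : ℕ) (i j : ι) := congrArg (fun P => (P i j).coeff k) h
  refine ⟨ext fun i j => ?_, ext fun i j => ?_, ext fun i j => ?_⟩
  · by_cases hij : i = j <;>
      simpa [-Matrix.map_mul, coeff_X, coeff_C, one_apply, hij] using hcoeff 2 i j
  · by_cases hij : i = j <;>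
      simpa [-Matrix.map_mul, coeff_X, coeff_C, one_apply, hij] using hcoeff 1 i j
  · by_cases hij : i = j <;>
      simpa [-Matrix.map_mul, coeff_X, coeff_C, one_apply, hij] using hcoeff 0 i j

end PolynomialMatrix

section BanachAlgebra

variable {A : Type*} [NormedRing A] [NormedAlgebra ℂ A] [CompleteSpace A]

theorem tendsto_pow_atTop_nhds_zero_of_spectralRadius_lt_one {a : A}
    (h : spectralRadius ℂ a < 1) : Tendsto (a ^ ·) atTop (𝓝 0) := by
  obtain ⟨c, hac, hc1⟩ := exists_between h
  have hc : c ≠ ⊤ := ne_top_of_lt hc1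
  have hbound : ∀ᶠ k : ℕ in atTop, ‖a ^ k‖ ≤ c.toReal ^ k := by
    have hgelfand := spectrum.pow_nnnorm_pow_one_div_tendsto_nhds_spectralRadius a
    filter_upwards [hgelfand.eventually_lt_const hac, eventually_ne_atTop 0] with k hk hk0
    have : (‖a ^ k‖₊ : ENNReal) ≤ c ^ k :=
      calc (‖a ^ k‖₊ : ENNReal) = ((‖a ^ k‖₊ : ENNReal) ^ (1 / (k : ℝ))) ^ k := by
            rw [← ENNReal.rpow_natCast, ← ENNReal.rpow_mul,
              one_div_mul_cancel (by exact_mod_cast hk0), ENNReal.rpow_one]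
        _ ≤ c ^ k := by gcongr
    simpa [ENNReal.toReal_pow] using ENNReal.toReal_mono (ENNReal.pow_ne_top hc) this
  refine squeeze_zero_norm' hbound
    (tendsto_pow_atTop_nhds_zero_of_lt_one ENNReal.toReal_nonneg ?_)
  exact ENNReal.toReal_lt_of_lt_ofReal (by simpa using hc1)

theorem norm_lt_one_of_mem_spectrum_of_tendsto_pow {a : A} (h : Tendsto (a ^ ·) atTop (𝓝 0))
    {μ : ℂ} (hμ : μ ∈ spectrum ℂ a) : ‖μ‖ < 1 := by
  have hle : ∀ k : ℕ, ‖μ‖ ^ k ≤ ‖a ^ k‖ * ‖(1 : A)‖ := fun k => by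
    simpa [norm_pow] using spectrum.norm_le_norm_mul_of_mem (spectrum.pow_mem_pow a k hμ)
  have hlim : Tendsto (fun k : ℕ => ‖a ^ k‖ * ‖(1 : A)‖) atTop (𝓝 0) := by
    simpa using h.norm.mul_const ‖(1 : A)‖
  by_contra! h1
  have := ge_of_tendsto hlim (Eventually.of_forall fun k => (one_le_pow₀ h1).trans (hle k))
  norm_num at this

end BanachAlgebra

theorem Matrix.tendsto_iff_forall_tendsto_mulVec {α R m n : Type*} [Fintype n] [DecidableEq n]
    [Semiring R] [TopologicalSpace R] [IsTopologicalSemiring R] {l : Filter α}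
    {f : α → Matrix m n R} {M : Matrix m n R} :
    Tendsto f l (𝓝 M) ↔ ∀ v, Tendsto (fun a => f a *ᵥ v) l (𝓝 (M *ᵥ v)) := by
  refine ⟨fun h v => ((continuous_id.matrix_mulVec continuous_const).tendsto M).comp h,
    fun h => tendsto_pi_nhds.2 fun i => tendsto_pi_nhds.2 fun j => ?_⟩
  simpa [Matrix.mulVec_single] using tendsto_pi_nhds.1 (h (Pi.single j 1)) i

-- Any submultiplicative norm would do: its topology is the product one, as in the statement.
attribute [local instance] Matrix.linftyOpNormedRing Matrix.linftyOpNormedAlgebra in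
theorem schurStable_iff_tendsto_pow {n : ℕ} {M : Matrix (Fin n) (Fin n) ℝ} :
    SchurStable M ↔ Tendsto (M ^ ·) atTop (𝓝 0) := by
  rw [SchurStable, Complex.coe_algebraMap]
  have hpow (k : ℕ) : M.map Complex.ofReal ^ k = (M ^ k).map Complex.ofReal :=
    (map_pow Complex.ofRealHom.mapMatrix M k).symm
  constructor
  · intro h
    have hρ : spectralRadius ℂ (M.map Complex.ofReal) < 1 := by
      rcases (spectrum ℂ (M.map Complex.ofReal)).eq_empty_or_nonempty with he | hne
      · simp [spectralRadius, he]
      · exact_mod_cast spectrum.spectralRadius_lt_of_forall_lt_of_nonempty hne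
          fun μ hμ => by exact_mod_cast h μ hμ
    have := ((continuous_id.matrix_map Complex.continuous_re).tendsto 0).comp
      (tendsto_pow_atTop_nhds_zero_of_spectralRadius_lt_one hρ)
    simpa [Function.comp_def, hpow, Matrix.map_map] using this
  · intro h μ hμ
    refine norm_lt_one_of_mem_spectrum_of_tendsto_pow ?_ hμ
    have := ((continuous_id.matrix_map Complex.continuous_ofReal).tendsto 0).comp h
    simp only [Function.comp_def, ← hpow, id, Matrix.map_zero _ Complex.ofReal_zero] at this
    exact this

theorem exists_sigmaSol {n m p r : ℕ}
    (A : Matrix (Fin n) (Fin n) ℝ) (B : Matrix (Fin n) (Fin m) ℝ)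
    (Cm : Matrix (Fin p) (Fin n) ℝ) (Dm : Matrix (Fin p) (Fin m) ℝ)
    (E : Matrix (Fin n) (Fin r) ℝ) (F : Matrix (Fin p) (Fin r) ℝ)
    (ξ : Fin n → ℝ) (u : ℕ → Fin m → ℝ) (d : ℕ → Fin r → ℝ) :
    ∃ x y, x 0 = ξ ∧ SigmaSol A B Cm Dm E F x u y d := by
  let x : ℕ → Fin n → ℝ := fun t => Nat.rec ξ (fun s xs => A *ᵥ xs + B *ᵥ u s + E *ᵥ d s) t
  exact ⟨x, fun t => Cm *ᵥ x t + Dm *ᵥ u t + F *ᵥ d t, rfl, fun t => ⟨rfl, rfl⟩⟩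

section Observer

variable {n m p r : ℕ} {A : Matrix (Fin n) (Fin n) ℝ} {B : Matrix (Fin n) (Fin m) ℝ}
  {Cm : Matrix (Fin p) (Fin n) ℝ} {Dm : Matrix (Fin p) (Fin m) ℝ}
  {E : Matrix (Fin n) (Fin r) ℝ} {F : Matrix (Fin p) (Fin r) ℝ}
  {Auio : Matrix (Fin n) (Fin n) ℝ} {Bu : Matrix (Fin n) (Fin m) ℝ}
  {By : Matrix (Fin n) (Fin p) ℝ} {Du : Matrix (Fin n) (Fin m) ℝ}
  {Dy : Matrix (Fin n) (Fin p) ℝ} {q : ℕ} {ME : Matrix (Fin q) (Fin n) ℝ}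
  {MF : Matrix (Fin q) (Fin p) ℝ}

theorem SigmaSol.sumElim_eq {x : ℕ → Fin n → ℝ} {u : ℕ → Fin m → ℝ} {y : ℕ → Fin p → ℝ}
    {d : ℕ → Fin r → ℝ} (h : SigmaSol A B Cm Dm E F x u y d) (t : ℕ) :
    Sum.elim (x (t + 1)) (y t) =
      fromRows A Cm *ᵥ x t + fromRows B Dm *ᵥ u t + fromRows E F *ᵥ d t := by
  simp only [fromRows_mulVec, (h t).1, (h t).2, Sum.elim_add_add]

theorem SigmaSol.fromCols_mulVec_eq {q : ℕ} {ME : Matrix (Fin q) (Fin n) ℝ}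
    {MF : Matrix (Fin q) (Fin p) ℝ} (hMW : fromCols ME MF * fromRows E F = 0)
    {x : ℕ → Fin n → ℝ} {u : ℕ → Fin m → ℝ} {y : ℕ → Fin p → ℝ} {d : ℕ → Fin r → ℝ}
    (h : SigmaSol A B Cm Dm E F x u y d) (t : ℕ) :
    ME *ᵥ x (t + 1) + MF *ᵥ y t =
      (fromCols ME MF * fromRows A Cm) *ᵥ x t + (fromCols ME MF * fromRows B Dm) *ᵥ u t := by
  rw [← fromCols_mulVec_sumElim, h.sumElim_eq, mulVec_add, mulVec_add, mulVec_mulVec,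
    mulVec_mulVec, mulVec_mulVec, hMW, zero_mulVec, add_zero]

theorem ObsSol.succ_sub_eq {xh : ℕ → Fin n → ℝ} {u : ℕ → Fin m → ℝ} {y : ℕ → Fin p → ℝ}
    {z : ℕ → Fin n → ℝ} (h : ObsSol Auio Bu By Du Dy xh u y z) (t : ℕ) :
    xh (t + 1) - Du *ᵥ u (t + 1) - Dy *ᵥ y (t + 1) =
      Auio *ᵥ (xh t - Du *ᵥ u t - Dy *ᵥ y t) + Bu *ᵥ u t + By *ᵥ y t := by
  have hz (s : ℕ) : xh s - Du *ᵥ u s - Dy *ᵥ y s = z s := by rw [(h s).2]; abel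
  rw [hz, hz, (h t).1]

theorem ObsSol.sub_eq_pow_mulVec {xh xh' : ℕ → Fin n → ℝ} {u : ℕ → Fin m → ℝ}
    {y : ℕ → Fin p → ℝ} {z z' : ℕ → Fin n → ℝ} (h : ObsSol Auio Bu By Du Dy xh u y z)
    (h' : ObsSol Auio Bu By Du Dy xh' u y z') (t : ℕ) :
    xh t - xh' t = (Auio ^ t) *ᵥ (xh 0 - xh' 0) := by
  have hsub (s : ℕ) : xh s - xh' s = z s - z' s := by rw [(h s).2, (h' s).2]; abel
  induction t with
  | zero => rw [pow_zero, one_mulVec]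
  | succ t ih =>
    rw [hsub, (h t).1, (h' t).1, pow_succ', ← mulVec_mulVec, ← ih, hsub, mulVec_sub]
    abel

theorem isUIO_of_isAcceptor (hacc : IsAcceptor A B Cm Dm E F Auio Bu By Du Dy)
    (hA : SchurStable Auio) : IsUIO A B Cm Dm E F Auio Bu By Du Dy := by
  refine ⟨hacc, fun x u y d xh z hx hxh => ?_⟩
  obtain ⟨zx, hzx⟩ := hacc x u y d hx
  have hpow := Matrix.tendsto_iff_forall_tendsto_mulVec.1 (schurStable_iff_tendsto_pow.1 hA)
    (x 0 - xh 0)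
  rw [zero_mulVec] at hpow
  exact hpow.congr fun t => (hzx.sub_eq_pow_mulVec hxh t).symm

theorem IsUIO.schurStable (h : IsUIO A B Cm Dm E F Auio Bu By Du Dy) : SchurStable Auio := by
  refine schurStable_iff_tendsto_pow.2 (Matrix.tendsto_iff_forall_tendsto_mulVec.2 fun v => ?_)
  have hx : SigmaSol A B Cm Dm E F 0 0 0 0 := fun t => by simp
  have hxh : ObsSol Auio Bu By Du Dy (fun t => Auio ^ t *ᵥ v) 0 0 (fun t => Auio ^ t *ᵥ v) :=
    fun t => by simp [pow_succ', ← mulVec_mulVec]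
  simpa using (h.2 _ _ _ _ _ _ hx hxh).neg

theorem IsAcceptor.mulVec_eq (h : IsAcceptor A B Cm Dm E F Auio Bu By Du Dy)
    (ξ : Fin n → ℝ) (d₀ d₁ : Fin r → ℝ) :
    ((1 - Dy * Cm) * A + (Auio * Dy - By) * Cm) *ᵥ ξ +
        ((1 - Dy * Cm) * E + (Auio * Dy - By) * F) *ᵥ d₀ - (Dy * F) *ᵥ d₁ = Auio *ᵥ ξ := by
  obtain ⟨x, y, hx₀, hx⟩ := exists_sigmaSol A B Cm Dm E F ξ 0 fun t => if t = 0 then d₀ else d₁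
  obtain ⟨z, hz⟩ := h x 0 y _ hx
  have hstep := hz.succ_sub_eq 0
  have hx₁ := (hx 0).1
  have hy₀ := (hx 0).2
  have hy₁ := (hx 1).2
  simp only [Pi.zero_apply, mulVec_zero, add_zero, sub_zero, if_pos, one_ne_zero, if_false,
    zero_add] at hstep hx₁ hy₀ hy₁
  rw [hy₁, hy₀, hx₁, hx₀] at hstep
  simp only [add_mulVec, sub_mulVec, one_mulVec, mulVec_add, mulVec_sub,
    ← mulVec_mulVec] at hstep ⊢
  linear_combination (norm := abel) hstep

theorem IsAcceptor.mul_eq (h : IsAcceptor A B Cm Dm E F Auio Bu By Du Dy) :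
    (1 - Dy * Cm) * A + (Auio * Dy - By) * Cm = Auio ∧
      (1 - Dy * Cm) * E + (Auio * Dy - By) * F = 0 ∧ Dy * F = 0 :=
  ⟨ext_iff_mulVec.2 fun ξ => by simpa using h.mulVec_eq ξ 0 0,
    ext_iff_mulVec.2 fun d => by simpa using h.mulVec_eq 0 d 0,
    ext_iff_mulVec.2 fun d => by simpa using h.mulVec_eq 0 0 d⟩

theorem IsAcceptor.exists_factorization
    (hM : ∀ v, fromCols ME MF *ᵥ v = 0 → ∃ c, v = fromRows E F *ᵥ c)
    (h : IsAcceptor A B Cm Dm E F Auio Bu By Du Dy) :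
    ∃ T₀ T₁ : Matrix (Fin n) (Fin q) ℝ, T₁ * ME = 0 ∧
      T₀ * ME - T₁ * (fromCols ME MF * fromRows A Cm) = 1 ∧
      T₀ * (fromCols ME MF * fromRows A Cm) = Auio := by
  obtain ⟨hA, hE, hF⟩ := h.mul_eq
  have hfactor (L : Matrix (Fin n) (Fin n ⊕ Fin p) ℝ) (hL : L * fromRows E F = 0) :
      ∃ G : Matrix (Fin n) (Fin q) ℝ, G * fromCols ME MF = L :=
    exists_mul_eq_of_mulVec_eq_zero _ _ fun v hv => by
      obtain ⟨c, rfl⟩ := hM v hv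
      rw [mulVec_mulVec, hL, zero_mulVec]
  obtain ⟨G₀, hG₀⟩ := hfactor (fromCols (1 - Dy * Cm) (Auio * Dy - By))
    (by rw [fromCols_mul_fromRows, hE])
  obtain ⟨G₁, hG₁⟩ := hfactor (fromCols 0 Dy)
    (by rw [fromCols_mul_fromRows, Matrix.zero_mul, zero_add, hF])
  have hG₀E : G₀ * ME = 1 - Dy * Cm :=
    ((fromCols_ext_iff _ _ _ _).1 (mul_fromCols G₀ ME MF ▸ hG₀)).1
  have hG₁E : G₁ * ME = 0 := ((fromCols_ext_iff _ _ _ _).1 (mul_fromCols G₁ ME MF ▸ hG₁)).1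
  refine ⟨G₀, -G₁, by rw [Matrix.neg_mul, hG₁E, neg_zero], ?_, ?_⟩
  · rw [Matrix.neg_mul, sub_neg_eq_add, ← Matrix.mul_assoc, hG₁, hG₀E, fromCols_mul_fromRows,
      Matrix.zero_mul, zero_add, sub_add_cancel]
  · rw [← Matrix.mul_assoc, hG₀, fromCols_mul_fromRows, hA]

theorem isAcceptor_of_forall_sigmaSol {N : Matrix (Fin q) (Fin n) ℝ}
    {K : Matrix (Fin q) (Fin m) ℝ}
    (hsol : ∀ x u y d, SigmaSol A B Cm Dm E F x u y d →
      ∀ t, ME *ᵥ x (t + 1) + MF *ᵥ y t = N *ᵥ x t + K *ᵥ u t)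
    {T₀ T₁ : Matrix (Fin n) (Fin q) ℝ} (h₁ : T₁ * ME = 0) (h₂ : T₀ * ME - T₁ * N = 1)
    (h₀ : T₀ * N = Auio) :
    IsAcceptor A B Cm Dm E F Auio (T₀ * K + Auio * (T₁ * K)) (-(T₀ * MF) - Auio * (T₁ * MF))
      (T₁ * K) (-(T₁ * MF)) := by
  intro x u y d hx
  have hN (t : ℕ) : N *ᵥ x t = ME *ᵥ x (t + 1) + MF *ᵥ y t - K *ᵥ u t := by
    rw [hsol x u y d hx t, add_sub_cancel_right]
  have hrec (t : ℕ) : x t = (T₀ * ME) *ᵥ x t + (T₁ * K) *ᵥ u t + (-(T₁ * MF)) *ᵥ y t :=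
    calc x t = (T₀ * ME - T₁ * N) *ᵥ x t := by rw [h₂, one_mulVec]
      _ = (T₀ * ME) *ᵥ x t - (T₁ * ME) *ᵥ x (t + 1) - (T₁ * MF) *ᵥ y t + (T₁ * K) *ᵥ u t := by
        rw [sub_mulVec, ← mulVec_mulVec _ T₁, hN]
        simp only [mulVec_sub, mulVec_add, mulVec_mulVec]
        abel
      _ = _ := by rw [h₁, zero_mulVec, neg_mulVec]; abel
  have hnext (t : ℕ) :
      (T₀ * ME) *ᵥ x (t + 1) = Auio *ᵥ x t + (T₀ * K) *ᵥ u t - (T₀ * MF) *ᵥ y t := by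
    rw [← h₀, ← mulVec_mulVec, eq_sub_of_add_eq (hsol x u y d hx t)]
    simp only [mulVec_sub, mulVec_add, mulVec_mulVec]
  refine ⟨fun t => (T₀ * ME) *ᵥ x t, fun t => ⟨?_, hrec t⟩⟩
  beta_reduce
  rw [hnext]
  nth_rewrite 1 [hrec t]
  simp only [mulVec_add, add_mulVec, sub_mulVec, neg_mulVec, mulVec_neg, ← mulVec_mulVec]
  abel

end Observer

theorem theorem2_i_iff_iii_general {n m p r : ℕ}
    (A : Matrix (Fin n) (Fin n) ℝ) (B : Matrix (Fin n) (Fin m) ℝ)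
    (Cm : Matrix (Fin p) (Fin n) ℝ) (Dm : Matrix (Fin p) (Fin m) ℝ)
    (E : Matrix (Fin n) (Fin r) ℝ) (F : Matrix (Fin p) (Fin r) ℝ)
    (ME : Matrix (Fin (n + p - r)) (Fin n) ℝ) (MF : Matrix (Fin (n + p - r)) (Fin p) ℝ)
    (hMker : ∀ v : Fin n ⊕ Fin p → ℝ,
      (Matrix.fromCols ME MF).mulVec v = 0 ↔
        ∃ c : Fin r → ℝ, v = (Matrix.fromRows E F).mulVec c) :
    (∃ (Auio : Matrix (Fin n) (Fin n) ℝ) (Bu : Matrix (Fin n) (Fin m) ℝ)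
      (By : Matrix (Fin n) (Fin p) ℝ) (Du : Matrix (Fin n) (Fin m) ℝ)
      (Dy : Matrix (Fin n) (Fin p) ℝ), IsUIO A B Cm Dm E F Auio Bu By Du Dy) ↔
    (∃ (T0 T1 : Matrix (Fin n) (Fin (n + p - r)) ℝ)
      (Auio : Matrix (Fin n) (Fin n) ℝ), SchurStable Auio ∧
      (T0.map (Polynomial.C : ℝ →+* Polynomial ℝ) +
        (Polynomial.X : Polynomial ℝ) • T1.map (Polynomial.C : ℝ →+* Polynomial ℝ)) *
        (Matrix.fromCols ME MF).map (Polynomial.C : ℝ →+* Polynomial ℝ) *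
        Matrix.fromRows
          ((Polynomial.X : Polynomial ℝ) • (1 : Matrix (Fin n) (Fin n) (Polynomial ℝ)) -
            A.map (Polynomial.C : ℝ →+* Polynomial ℝ))
          (-(Cm.map (Polynomial.C : ℝ →+* Polynomial ℝ))) =
        (Polynomial.X : Polynomial ℝ) • (1 : Matrix (Fin n) (Fin n) (Polynomial ℝ)) -
          Auio.map (Polynomial.C : ℝ →+* Polynomial ℝ)) := by
  have hMW : fromCols ME MF * fromRows E F = 0 :=
    ext_iff_mulVec.2 fun c => by rw [← mulVec_mulVec, zero_mulVec, hMker]; exact ⟨c, rfl⟩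
  simp only [Matrix.mul_assoc, map_C_fromCols_mul_fromRows, map_C_mul_X_smul_sub_eq_iff]
  constructor
  · rintro ⟨Auio, Bu, By, Du, Dy, h⟩
    obtain ⟨T₀, T₁, hT⟩ := h.1.exists_factorization fun v => (hMker v).1
    exact ⟨T₀, T₁, Auio, h.schurStable, hT⟩
  · rintro ⟨T₀, T₁, Auio, hA, h₁, h₂, h₀⟩
    exact ⟨_, _, _, _, _, isUIO_of_isAcceptor
      (isAcceptor_of_forall_sigmaSol (fun _ _ _ _ hx => hx.fromCols_mulVec_eq hMW) h₁ h₂ h₀) hA⟩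

theorem theorem2_i_iff_iii {n m p r : ℕ} (hn : 0 < n) (hm : 0 < m) (hp : 0 < p) (hr : 0 < r)
    (A : Matrix (Fin n) (Fin n) ℝ) (B : Matrix (Fin n) (Fin m) ℝ)
    (Cm : Matrix (Fin p) (Fin n) ℝ) (Dm : Matrix (Fin p) (Fin m) ℝ)
    (E : Matrix (Fin n) (Fin r) ℝ) (F : Matrix (Fin p) (Fin r) ℝ)
    (hEF : (Matrix.fromRows E F).rank = r)
    (ME : Matrix (Fin (n + p - r)) (Fin n) ℝ) (MF : Matrix (Fin (n + p - r)) (Fin p) ℝ)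
    (hMrank : (Matrix.fromCols ME MF).rank = n + p - r)
    (hMker : ∀ v : Fin n ⊕ Fin p → ℝ,
      (Matrix.fromCols ME MF).mulVec v = 0 ↔
        ∃ c : Fin r → ℝ, v = (Matrix.fromRows E F).mulVec c) :
    (∃ (Auio : Matrix (Fin n) (Fin n) ℝ) (Bu : Matrix (Fin n) (Fin m) ℝ)
      (By : Matrix (Fin n) (Fin p) ℝ) (Du : Matrix (Fin n) (Fin m) ℝ)
      (Dy : Matrix (Fin n) (Fin p) ℝ), IsUIO A B Cm Dm E F Auio Bu By Du Dy) ↔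
    (∃ (T0 T1 : Matrix (Fin n) (Fin (n + p - r)) ℝ)
      (Auio : Matrix (Fin n) (Fin n) ℝ), SchurStable Auio ∧
      (T0.map (Polynomial.C : ℝ →+* Polynomial ℝ) +
        (Polynomial.X : Polynomial ℝ) • T1.map (Polynomial.C : ℝ →+* Polynomial ℝ)) *
        (Matrix.fromCols ME MF).map (Polynomial.C : ℝ →+* Polynomial ℝ) *
        Matrix.fromRows
          ((Polynomial.X : Polynomial ℝ) • (1 : Matrix (Fin n) (Fin n) (Polynomial ℝ)) -
            A.map (Polynomial.C : ℝ →+* Polynomial ℝ))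
          (-(Cm.map (Polynomial.C : ℝ →+* Polynomial ℝ))) =
        (Polynomial.X : Polynomial ℝ) • (1 : Matrix (Fin n) (Fin n) (Polynomial ℝ)) -
          Auio.map (Polynomial.C : ℝ →+* Polynomial ℝ)) :=
  theorem2_i_iff_iii_general A B Cm Dm E F ME MF hMker
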